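/- arXiv:2211.02365 — 4 statements merged into one kernel-verified Lean document; each statement's English description precedes it below -/
import Mathlib

section
/- If θ is an irrational real number, then for real numbers z, x, y, the inequality z - x·cos(2πnθ) - y·sin(2πnθ) ≥ 0 holds for all natural numbers n if and only if z ≥ √(x² + y²). -/
/-!
The orbit `n ↦ 2πnθ` of an irrational rotation is dense in the circle `Real.Angle`, and
`ψ ↦ x cos ψ + y sin ψ` is continuous there, so its values along the orbit are bounded by `z`
exactly when all its values are. Its maximum over the circle is `√(x² + y²)`: Cauchy–Schwarz
bounds it, and the argument of `x + y i` attains it.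
-/

open Real

theorem mul_cos_add_mul_sin_le_sqrt (x y t : ℝ) :
    x * cos t + y * sin t ≤ √(x ^ 2 + y ^ 2) := by
  apply Real.le_sqrt_of_sq_le
  nlinarith [sq_nonneg (x * sin t - y * cos t), sin_sq_add_cos_sq t]

theorem exists_mul_cos_add_mul_sin_eq_sqrt (x y : ℝ) :
    ∃ t, x * cos t + y * sin t = √(x ^ 2 + y ^ 2) := by
  set w : ℂ := ⟨x, y⟩
  have hw : ‖w‖ = √(x ^ 2 + y ^ 2) := by
    rw [Complex.norm_def, Complex.normSq_mk]; ring_nf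
  rcases eq_or_ne w 0 with h0 | h0
  · obtain ⟨rfl, rfl⟩ : x = 0 ∧ y = 0 := Complex.ext_iff.mp h0
    exact ⟨0, by simp⟩
  refine ⟨w.arg, ?_⟩
  rw [Complex.cos_arg h0, Complex.sin_arg, ← hw]
  field_simp
  rw [hw, sq_sqrt (by positivity)]
  ring

theorem denseRange_two_pi_mul_nat_mul_angle {θ : ℝ} (hθ : Irrational θ) :
    DenseRange (fun n : ℕ ↦ ((2 * π * n * θ : ℝ) : Angle)) := by
  have : Fact (0 < 2 * π) := ⟨two_pi_pos⟩
  have : CompactSpace Angle := inferInstanceAs (CompactSpace (AddCircle (2 * π)))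
  have hz : DenseRange (fun m : ℤ ↦ m • ((2 * π * θ : ℝ) : Angle)) :=
    AddCircle.denseRange_zsmul_coe_iff.mpr (by rwa [mul_div_cancel_left₀ _ two_pi_pos.ne'])
  convert denseRange_zsmul_iff_nsmul.mp hz using 2 with n
  rw [← Angle.coe_nsmul, nsmul_eq_mul]
  ring_nf

theorem stmt_1 (θ : ℝ) (hθ : Irrational θ) (z x y : ℝ) :
    (∀ n : ℕ, z - x * Real.cos (2 * π * n * θ) - y * Real.sin (2 * π * n * θ) ≥ 0) ↔
      z ≥ Real.sqrt (x ^ 2 + y ^ 2) := by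
  constructor
  · intro h
    obtain ⟨t, ht⟩ := exists_mul_cos_add_mul_sin_eq_sqrt x y
    have hclosed : IsClosed {ψ : Angle | x * ψ.cos + y * ψ.sin ≤ z} :=
      isClosed_le ((continuous_const.mul Angle.continuous_cos).add
        (continuous_const.mul Angle.continuous_sin)) continuous_const
    have hle : x * cos t + y * sin t ≤ z := by
      simpa only [Angle.cos_coe, Angle.sin_coe] using
        (denseRange_two_pi_mul_nat_mul_angle hθ).induction_on
          (p := fun ψ ↦ x * ψ.cos + y * ψ.sin ≤ z) (t : Angle) hclosed
          fun n ↦ by simp only [Angle.cos_coe, Angle.sin_coe]; linarith [h n]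
    linarith
  · intro h n
    linarith [mul_cos_add_mul_sin_le_sqrt x y (2 * π * n * θ)]
end

section
/- Let θ be irrational and let vₙ(z,x,y,z',x',y') = z - x·cos(2πnθ) - y·sin(2πnθ) + (z' - x'·cos(2πnθ) - y'·sin(2πnθ))/n for n ≥ 1. If (z, x, y, z', x', y') is such that vₙ ≥ 0 for all n ≥ 1, then z ≥ √(x² + y²). -/
open Real Filter Topology

/-!
Write `vₙ = f(nθ) + g(nθ) / n` with `f`, `g` continuous on `ℝ/ℤ`. As `g` is bounded, `g(nθ) / n → 0`;
as `θ` is irrational, every point of `ℝ/ℤ` is a cluster point of `(nθ)ₙ`. Hence `f ≥ 0` everywhere,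
and at the argument of `x + iy` the value of `f` is `z - √(x² + y²)`.
-/

theorem MapClusterPt.nonneg_of_eventually_nonneg_add {ι X : Type*} [TopologicalSpace X]
    {l : Filter ι} {u : ι → X} {p : X} (hp : MapClusterPt p l u) {f : X → ℝ}
    (hf : ContinuousAt f p) {g : ι → ℝ} (hg : Tendsto g l (𝓝 0))
    (h : ∀ᶠ i in l, 0 ≤ f (u i) + g i) : 0 ≤ f p := by
  by_contra! hneg
  have hf' : ∀ᶠ y in 𝓝 p, f y < f p / 2 := hf.eventually (gt_mem_nhds (by linarith))
  have hg' : ∀ᶠ i in l, g i < -f p / 2 := hg.eventually (gt_mem_nhds (by linarith))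
  obtain ⟨i, hfi, hgi, hi⟩ := ((hp.frequently hf').and_eventually (hg'.and h)).exists
  linarith

theorem tendsto_comp_div_natCast_atTop_zero {X : Type*} [TopologicalSpace X] [CompactSpace X]
    {f : X → ℝ} (hf : Continuous f) (u : ℕ → X) :
    Tendsto (fun n : ℕ ↦ f (u n) / n) atTop (𝓝 0) := by
  obtain ⟨C, hC⟩ := (isCompact_range hf).isBounded.exists_norm_le
  simp_rw [div_eq_mul_inv]
  exact isBoundedUnder_le_mul_tendsto_zero (isBoundedUnder_of ⟨C, fun n ↦ hC _ ⟨u n, rfl⟩⟩)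
    tendsto_inv_atTop_nhds_zero_nat

theorem AddCircle.mapClusterPt_atTop_nsmul_of_irrational {T θ : ℝ} [Fact (0 < T)]
    (hθ : Irrational (θ / T)) (p : AddCircle T) :
    MapClusterPt p atTop (fun n : ℕ ↦ n • (θ : AddCircle T)) :=
  ((mapClusterPt_atTop_nsmul_tfae p (θ : AddCircle T)).out 0 3).2
    (AddCircle.denseRange_zsmul_coe_iff.2 hθ p)

noncomputable def trigPoly (z x y : ℝ) (t : UnitAddCircle) : ℝ :=
  z - x * (AddCircle.toCircle t : ℂ).re - y * (AddCircle.toCircle t : ℂ).im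

theorem continuous_trigPoly (z x y : ℝ) : Continuous (trigPoly z x y) := by
  unfold trigPoly
  have hcont := AddCircle.continuous_toCircle (T := 1)
  fun_prop

theorem trigPoly_coe (z x y t : ℝ) :
    trigPoly z x y t = z - x * cos (2 * π * t) - y * sin (2 * π * t) := by
  simp [trigPoly, AddCircle.toCircle_apply_mk, Circle.coe_exp, Complex.exp_re, Complex.exp_im]

theorem exists_trigPoly_eq (z x y : ℝ) : ∃ t, trigPoly z x y t = z - √(x ^ 2 + y ^ 2) := by
  set w : ℂ := ⟨x, y⟩
  have hw : ‖w‖ = √(x ^ 2 + y ^ 2) := by simp [w, Complex.norm_def, Complex.normSq_apply, sq]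
  refine ⟨(w.arg / (2 * π) : ℝ), ?_⟩
  rw [trigPoly_coe, mul_div_cancel₀ _ (by positivity)]
  have hx : x = ‖w‖ * cos w.arg := (w.norm_mul_cos_arg).symm
  have hy : y = ‖w‖ * sin w.arg := (w.norm_mul_sin_arg).symm
  rw [← hw]
  linear_combination (-cos w.arg) * hx + (-sin w.arg) * hy - ‖w‖ * sin_sq_add_cos_sq w.arg

theorem stmt_7 (θ : ℝ) (hθ : Irrational θ) (z x y z' x' y' : ℝ)
    (h : ∀ n : ℕ, 1 ≤ n →
      z - x * Real.cos (2 * π * n * θ) - y * Real.sin (2 * π * n * θ) +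
          (z' - x' * Real.cos (2 * π * n * θ) - y' * Real.sin (2 * π * n * θ)) / n ≥ 0) :
    z ≥ Real.sqrt (x ^ 2 + y ^ 2) := by
  obtain ⟨p, hp⟩ := exists_trigPoly_eq z x y
  have hv : ∀ n : ℕ, 1 ≤ n → 0 ≤ trigPoly z x y (n • (θ : UnitAddCircle)) +
      trigPoly z' x' y' (n • (θ : UnitAddCircle)) / n := fun n hn ↦ by
    simpa only [← AddCircle.coe_nsmul, trigPoly_coe, nsmul_eq_mul, mul_assoc] using h n hn
  have hcluster := AddCircle.mapClusterPt_atTop_nsmul_of_irrational (T := 1) (by simpa using hθ) p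
  have hnonneg := hcluster.nonneg_of_eventually_nonneg_add (continuous_trigPoly z x y).continuousAt
    (tendsto_comp_div_natCast_atTop_zero (continuous_trigPoly z' x' y') _)
    (eventually_atTop.2 ⟨1, hv⟩)
  linarith
end

section
/- Every point d' = (z, x, y, z', x', y') in the closed ball of radius √2·ψ centered at (2+ψ, 2-ψ, 0, 0, 0, 2πℓ) in ℝ⁶, with 0 < ψ < 1/3, satisfies z ≥ √(x² + y²), with equality exactly at the point (2, 2, 0, 0, 0, 2πℓ). -/
/-!
Put `u = z - a`, `v = x - a` (here `a = 2`), and let `r` collect the squared offsets of the last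
three coordinates. The ball condition says `u² + v² + y² + r ≤ 2ψ(u - v)`, so
`ψ (z² - x² - y²) = 2aψ (u - v) + ψ (u² - v² - y²)` is at least
`(a + ψ) u² + (a - ψ) (v² + y²) + a r ≥ 0`, with equality only when `u = v = y = r = 0`.
-/

open Real

namespace LightConeBall

variable {a ψ z x y r : ℝ}

theorem mul_sq_sub_sq_sub_sq_eq :
    ψ * (z ^ 2 - x ^ 2 - y ^ 2) =
      (a + ψ) * (z - a) ^ 2 + (a - ψ) * ((x - a) ^ 2 + y ^ 2) + a * r +
        a * (2 * ψ ^ 2 - ((z - (a + ψ)) ^ 2 + (x - (a - ψ)) ^ 2 + y ^ 2 + r)) := by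
  ring

variable (hψ : 0 < ψ) (hr : 0 ≤ r)
  (hball : (z - (a + ψ)) ^ 2 + (x - (a - ψ)) ^ 2 + y ^ 2 + r ≤ 2 * ψ ^ 2)
include hψ hr hball

theorem sq_add_sq_le_sq (ha : ψ ≤ a) : x ^ 2 + y ^ 2 ≤ z ^ 2 := by
  have hgap : 0 ≤ ψ * (z ^ 2 - x ^ 2 - y ^ 2) := by
    rw [mul_sq_sub_sq_sub_sq_eq (a := a) (r := r)]
    have : 0 ≤ a := hψ.le.trans ha
    have : 0 ≤ a - ψ := sub_nonneg.mpr ha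
    positivity
  nlinarith

theorem nonneg (ha : ψ ≤ a) : 0 ≤ z := by
  nlinarith [sq_nonneg (x - (a - ψ)), sq_nonneg y]

theorem sqrt_sq_add_sq_le (ha : ψ ≤ a) : √(x ^ 2 + y ^ 2) ≤ z :=
  Real.sqrt_le_iff.mpr ⟨nonneg hψ hr hball ha, sq_add_sq_le_sq hψ hr hball ha⟩

theorem eq_of_sqrt_sq_add_sq_eq (ha : ψ < a) (heq : z = √(x ^ 2 + y ^ 2)) :
    z = a ∧ x = a ∧ y = 0 ∧ r = 0 := by
  have hzero : (a + ψ) * (z - a) ^ 2 + (a - ψ) * ((x - a) ^ 2 + y ^ 2) + a * r +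
      a * (2 * ψ ^ 2 - ((z - (a + ψ)) ^ 2 + (x - (a - ψ)) ^ 2 + y ^ 2 + r)) = 0 := by
    rw [← mul_sq_sub_sq_sub_sq_eq, heq, Real.sq_sqrt (by positivity)]
    ring
  have ha₀ : 0 < a := hψ.trans ha
  have haψ : 0 < a - ψ := sub_pos.mpr ha
  have hz : (z - a) ^ 2 = 0 := by nlinarith [sq_nonneg (z - a), sq_nonneg (x - a), sq_nonneg y]
  have hx : (x - a) ^ 2 = 0 := by nlinarith [sq_nonneg (z - a), sq_nonneg (x - a), sq_nonneg y]
  have hy : y ^ 2 = 0 := by nlinarith [sq_nonneg (z - a), sq_nonneg (x - a), sq_nonneg y]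
  refine ⟨?_, ?_, pow_eq_zero_iff two_ne_zero |>.mp hy, ?_⟩
  · linarith [pow_eq_zero_iff two_ne_zero |>.mp hz]
  · linarith [pow_eq_zero_iff two_ne_zero |>.mp hx]
  · nlinarith [sq_nonneg (z - a), sq_nonneg (x - a), sq_nonneg y]

end LightConeBall

theorem stmt_9_general (ψ ℓ : ℝ) (hψ0 : 0 < ψ) (hψ : ψ < 1 / 3)
    (d' : Fin 6 → ℝ)
    (hd' : Real.sqrt (∑ i, (d' i - (![2 + ψ, 2 - ψ, 0, 0, 0, 2 * π * ℓ]) i) ^ 2)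
      ≤ Real.sqrt 2 * ψ) :
    d' 0 ≥ Real.sqrt ((d' 1) ^ 2 + (d' 2) ^ 2) ∧
    (d' 0 = Real.sqrt ((d' 1) ^ 2 + (d' 2) ^ 2) ↔ d' = ![2, 2, 0, 0, 0, 2 * π * ℓ]) := by
  have hball : (d' 0 - (2 + ψ)) ^ 2 + (d' 1 - (2 - ψ)) ^ 2 + d' 2 ^ 2 +
      (d' 3 ^ 2 + d' 4 ^ 2 + (d' 5 - 2 * π * ℓ) ^ 2) ≤ 2 * ψ ^ 2 := by
    have h := (Real.sqrt_le_iff.mp hd').2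
    rw [mul_pow, Real.sq_sqrt zero_le_two, Fin.sum_univ_six] at h
    simp only [Matrix.cons_val, sub_zero] at h
    linarith
  have hr : 0 ≤ d' 3 ^ 2 + d' 4 ^ 2 + (d' 5 - 2 * π * ℓ) ^ 2 := by positivity
  have ha : ψ < 2 := by linarith
  refine ⟨LightConeBall.sqrt_sq_add_sq_le hψ0 hr hball ha.le, fun heq => ?_, fun heq => ?_⟩
  · obtain ⟨h0, h1, h2, hr0⟩ := LightConeBall.eq_of_sqrt_sq_add_sq_eq hψ0 hr hball ha heq
    have h3 : d' 3 = 0 := by nlinarith [sq_nonneg (d' 4), sq_nonneg (d' 5 - 2 * π * ℓ)]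
    have h4 : d' 4 = 0 := by nlinarith [sq_nonneg (d' 3), sq_nonneg (d' 5 - 2 * π * ℓ)]
    have h5 : d' 5 = 2 * π * ℓ := by
      nlinarith [sq_nonneg (d' 3), sq_nonneg (d' 4), sq_nonneg (d' 5 - 2 * π * ℓ)]
    ext i
    fin_cases i <;> simp [h0, h1, h2, h3, h4, h5]
  · subst heq
    show (2 : ℝ) = √(2 ^ 2 + 0 ^ 2)
    simp

theorem stmt_9 (ψ ℓ : ℝ) (hψ0 : 0 < ψ) (hψ : ψ < 1 / 3) (hℓ : 0 < ℓ)
    (d' : Fin 6 → ℝ)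
    (hd' : Real.sqrt (∑ i, (d' i - (![2 + ψ, 2 - ψ, 0, 0, 0, 2 * π * ℓ]) i) ^ 2)
      ≤ Real.sqrt 2 * ψ) :
    d' 0 ≥ Real.sqrt ((d' 1) ^ 2 + (d' 2) ^ 2) ∧
    (d' 0 = Real.sqrt ((d' 1) ^ 2 + (d' 2) ^ 2) ↔ d' = ![2, 2, 0, 0, 0, 2 * π * ℓ]) :=
  stmt_9_general ψ ℓ hψ0 hψ d' hd'
end

section
/- Let (uₙ) be a real sequence of the form uₙ = Σⱼ αⱼ·e^{i n θⱼ} where the αⱼ are complex constants and θⱼ real. Then for all ε > 0, j ∈ ℕ, and N ∈ ℕ, there exists n > N with |uₙ - uⱼ| < ε. -/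
/-!
The map `n ↦ uₙ` factors as `n ↦ f (xⁿ)` with `x = (e^{iθⱼ})ⱼ` in the compact group `𝕋ᵏ` and
`f z = Re (∑ⱼ αⱼ zⱼ)` continuous. In a compact group the powers of any element return to every
neighbourhood of `1` infinitely often: if `xᵃ` and `xᵇ` (with `b > a + N`) both lie close to a
cluster point of `(xⁿ)`, then `x^{b-a}` lies close to `1`. Hence `u_{j+m} = f (xʲ xᵐ)` is close to
`uⱼ = f (xʲ)` for infinitely many `m`.
-/

open Filter Topology

section CompactGroup

variable {G : Type*} [Group G] [TopologicalSpace G] [IsTopologicalGroup G] [CompactSpace G]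

theorem exists_gt_pow_mem_of_mem_nhds_one (x : G) {U : Set G} (hU : U ∈ 𝓝 1) (N : ℕ) :
    ∃ m > N, x ^ m ∈ U := by
  obtain ⟨a, -, ha⟩ := isCompact_univ.exists_mapClusterPt
    (f := atTop) (u := fun n : ℕ => x ^ n) (by simp)
  have hdiv : Tendsto (fun p : G × G => p.1 * p.2⁻¹) (𝓝 a ×ˢ 𝓝 a) (𝓝 1) := by
    have hc : Continuous fun p : G × G => p.1 * p.2⁻¹ := by fun_prop
    simpa [nhds_prod_eq] using hc.tendsto (a, a)
  obtain ⟨V, hV, hVU⟩ := mem_prod_self_iff.mp (hdiv hU)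
  have hfreq : ∃ᶠ n in atTop, x ^ n ∈ V := ha.frequently hV
  obtain ⟨p, hp⟩ := hfreq.exists
  obtain ⟨q, hqp, hq⟩ := frequently_atTop.mp hfreq (p + N + 1)
  refine ⟨q - p, by omega, ?_⟩
  rw [pow_sub x (by omega : p ≤ q)]
  exact hVU (Set.mk_mem_prod hq hp)

theorem exists_gt_comp_pow_mem_of_mem_nhds {X : Type*} [TopologicalSpace X] {f : G → X}
    (hf : Continuous f) (x : G) (j N : ℕ) {V : Set X} (hV : V ∈ 𝓝 (f (x ^ j))) :
    ∃ n > N, f (x ^ n) ∈ V := by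
  have hU : (fun y => f (x ^ j * y)) ⁻¹' V ∈ 𝓝 (1 : G) :=
    (hf.comp (continuous_const_mul _)).continuousAt.preimage_mem_nhds (by simpa using hV)
  obtain ⟨m, hmN, hm⟩ := exists_gt_pow_mem_of_mem_nhds_one x hU N
  exact ⟨j + m, by omega, by simpa [pow_add] using hm⟩

end CompactGroup

theorem Circle.coe_exp_pow (t : ℝ) (n : ℕ) :
    ((Circle.exp t ^ n : Circle) : ℂ) = Complex.exp (Complex.I * n * t) := by
  rw [Circle.coe_pow, Circle.coe_exp, ← Complex.exp_nat_mul]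
  ring_nf

theorem stmt_16 (k : ℕ) (α : Fin k → ℂ) (θ : Fin k → ℝ) (u : ℕ → ℝ)
    (hu : ∀ n : ℕ, (u n : ℂ) = ∑ j, α j * Complex.exp (Complex.I * n * (θ j : ℂ))) :
    ∀ ε > 0, ∀ j N : ℕ, ∃ n > N, |u n - u j| < ε := by
  intro ε hε j N
  set x : Fin k → Circle := fun i => Circle.exp (θ i)
  set f : (Fin k → Circle) → ℝ := fun z => (∑ i, α i * (z i : ℂ)).re
  have hf : Continuous f := by fun_prop
  have hu_eq : ∀ n, u n = f (x ^ n) := fun n => by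
    simp only [f, x, Pi.pow_apply, Circle.coe_exp_pow, ← hu, Complex.ofReal_re]
  obtain ⟨n, hnN, hn⟩ :=
    exists_gt_comp_pow_mem_of_mem_nhds hf x j N (Metric.ball_mem_nhds _ hε)
  refine ⟨n, hnN, ?_⟩
  rw [hu_eq, hu_eq, ← Real.dist_eq]
  exact hn
end
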